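/- Let f : Δ = [a,b]×[c,d] → (0,∞) be coordinated 1-convex (i.e., convex in each variable separately) and integrable, with a < b, c < d. Then (1/((b-a)(d-c))) ∫_a^b ∫_c^d f(x,y) dy dx ≤ (1/4)[ (1/(b-a)) ∫_a^b f(x,c) dx + (1/(b-a)) ∫_a^b f(x,d) dx + (1/(d-c)) ∫_c^d f(a,y) dy + (1/(d-c)) ∫_c^d f(b,y) dy ]. -/

import Mathlib

/-! The right half of the Hermite–Hadamard inequality, `∫_c^d g ≤ (d - c) (g c + g d) / 2` for
convex `g`, follows by pairing each point with its reflection through the midpoint. Applied to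
`y ↦ f x y` and integrated over `x`, it bounds the double integral by `(d - c) / 2` times the
integrals of `f` along the horizontal edges; by Fubini the same argument in the other variable
bounds it by `(b - a) / 2` times the integrals along the vertical edges, and the theorem is the
average of the two bounds. -/

open MeasureTheory Set

theorem convexOn_of_forall_mul_add_one_sub_mul_le {s : Set ℝ} {g : ℝ → ℝ} (hs : Convex ℝ s)
    (hg : ∀ u₁ ∈ s, ∀ u₂ ∈ s, ∀ t ∈ Icc (0 : ℝ) 1,
      g (t * u₁ + (1 - t) * u₂) ≤ t * g u₁ + (1 - t) * g u₂) :
    ConvexOn ℝ s g := by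
  refine ⟨hs, fun u₁ hu₁ u₂ hu₂ t t' ht ht' htt' => ?_⟩
  obtain rfl : t' = 1 - t := by linarith
  exact hg u₁ hu₁ u₂ hu₂ t ⟨ht, by linarith⟩

namespace ConvexOn

variable {a b : ℝ} {g : ℝ → ℝ}

theorem two_mul_apply_midpoint_le (hg : ConvexOn ℝ (Icc a b) g) {x : ℝ} (hx : x ∈ Icc a b) :
    2 * g ((a + b) / 2) ≤ g x + g (a + b - x) := by
  have hx' : a + b - x ∈ Icc a b := ⟨by linarith [hx.2], by linarith [hx.1]⟩
  have h := hg.2 hx hx' (by norm_num : (0 : ℝ) ≤ 1 / 2) (by norm_num : (0 : ℝ) ≤ 1 / 2)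
    (by norm_num)
  simp only [smul_eq_mul] at h
  rw [show 1 / 2 * x + 1 / 2 * (a + b - x) = (a + b) / 2 by ring] at h
  linarith

theorem add_apply_add_sub_le (hg : ConvexOn ℝ (Icc a b) g) {x : ℝ} (hx : x ∈ Icc a b) :
    g x + g (a + b - x) ≤ g a + g b := by
  have hab : a ≤ b := hx.1.trans hx.2
  rw [← segment_eq_Icc hab] at hg hx
  obtain ⟨s, t, hs, ht, hst, rfl⟩ := hx
  have ha : a ∈ segment ℝ a b := left_mem_segment ℝ a b
  have hb : b ∈ segment ℝ a b := right_mem_segment ℝ a b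
  have hreflect : a + b - (s • a + t • b) = t • a + s • b := by
    simp only [smul_eq_mul]; linear_combination -(a + b) * hst
  rw [hreflect]
  have h₁ := hg.2 ha hb hs ht hst
  have h₂ := hg.2 ha hb ht hs (by linarith)
  simp only [smul_eq_mul] at h₁ h₂ ⊢
  linear_combination h₁ + h₂ + (g a + g b) * hst

theorem integrableOn_Icc (hg : ConvexOn ℝ (Icc a b) g) : IntegrableOn g (Icc a b) := by
  rw [integrableOn_Icc_iff_integrableOn_Ioo]
  have hcont : ContinuousOn g (Ioo a b) := by
    simpa only [interior_Icc] using hg.continuousOn_interior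
  refine .of_bound measure_Ioo_lt_top (hcont.aestronglyMeasurable measurableSet_Ioo)
    (max |2 * g ((a + b) / 2) - max (g a) (g b)| |max (g a) (g b)|) ?_
  filter_upwards [ae_restrict_mem measurableSet_Ioo] with x hx
  have hx : x ∈ Icc a b := Ioo_subset_Icc_self hx
  have hab : a ≤ b := hx.1.trans hx.2
  have hx' : a + b - x ∈ Icc a b := ⟨by linarith [hx.2], by linarith [hx.1]⟩
  have hle : ∀ z ∈ Icc a b, g z ≤ max (g a) (g b) := fun z hz =>
    hg.le_on_segment (left_mem_Icc.2 hab) (right_mem_Icc.2 hab) (by rwa [segment_eq_Icc hab])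
  have := hg.two_mul_apply_midpoint_le hx
  exact abs_le_max_abs_abs (by linarith [hle _ hx']) (hle x hx)

theorem intervalIntegrable (hg : ConvexOn ℝ (Icc a b) g) (hab : a ≤ b) :
    IntervalIntegrable g volume a b :=
  (intervalIntegrable_iff_integrableOn_Icc_of_le hab).2 hg.integrableOn_Icc

theorem intervalIntegral_le_trapezoid (hg : ConvexOn ℝ (Icc a b) g) (hab : a ≤ b) :
    ∫ x in a..b, g x ≤ (b - a) * (g a + g b) / 2 := by
  have hi := hg.intervalIntegrable hab
  have hi' : IntervalIntegrable (fun x => g (a + b - x)) volume a b := by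
    simpa using hi.symm.comp_sub_left (a + b)
  have hreflect : ∫ x in a..b, g (a + b - x) = ∫ x in a..b, g x := by
    simp [intervalIntegral.integral_comp_sub_left]
  have hsum : ∫ x in a..b, (g x + g (a + b - x)) ≤ ∫ _ in a..b, (g a + g b) :=
    intervalIntegral.integral_mono_on hab (hi.add hi') intervalIntegrable_const
      fun x hx => hg.add_apply_add_sub_le hx
  rw [intervalIntegral.integral_add hi hi', hreflect, intervalIntegral.integral_const,
    smul_eq_mul] at hsum
  linarith

end ConvexOn

variable {a b c d : ℝ} {f : ℝ → ℝ → ℝ}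

theorem integrable_prod_restrict_of_integrableOn {s t : Set ℝ}
    (hf : IntegrableOn (fun p : ℝ × ℝ => f p.1 p.2) (s ×ˢ t)) :
    Integrable (Function.uncurry f) ((volume.restrict s).prod (volume.restrict t)) := by
  rwa [Measure.prod_restrict, ← Measure.volume_eq_prod]

theorem intervalIntegral_integral_swap (hab : a ≤ b) (hcd : c ≤ d)
    (hf : IntegrableOn (fun p : ℝ × ℝ => f p.1 p.2) (Icc a b ×ˢ Icc c d)) :
    ∫ x in a..b, ∫ y in c..d, f x y = ∫ y in c..d, ∫ x in a..b, f x y := by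
  simp only [intervalIntegral.integral_of_le hab, intervalIntegral.integral_of_le hcd,
    ← integral_Icc_eq_integral_Ioc]
  exact integral_integral_swap (integrable_prod_restrict_of_integrableOn hf)

theorem intervalIntegrable_intervalIntegral (hab : a ≤ b) (hcd : c ≤ d)
    (hf : IntegrableOn (fun p : ℝ × ℝ => f p.1 p.2) (Icc a b ×ˢ Icc c d)) :
    IntervalIntegrable (fun x => ∫ y in c..d, f x y) volume a b := by
  refine (intervalIntegrable_iff_integrableOn_Icc_of_le hab).2 ?_
  simpa only [intervalIntegral.integral_of_le hcd, ← integral_Icc_eq_integral_Ioc,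
    Function.uncurry_apply_pair, IntegrableOn]
    using (integrable_prod_restrict_of_integrableOn hf).integral_prod_left

theorem intervalIntegral_integral_le_trapezoid (hab : a ≤ b) (hcd : c ≤ d)
    (hf : IntegrableOn (fun p : ℝ × ℝ => f p.1 p.2) (Icc a b ×ˢ Icc c d))
    (hconv : ∀ x ∈ Icc a b, ConvexOn ℝ (Icc c d) (f x))
    (hfc : IntervalIntegrable (f · c) volume a b) (hfd : IntervalIntegrable (f · d) volume a b) :
    ∫ x in a..b, ∫ y in c..d, f x y ≤
      (d - c) * ((∫ x in a..b, f x c) + ∫ x in a..b, f x d) / 2 := by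
  calc ∫ x in a..b, ∫ y in c..d, f x y ≤ ∫ x in a..b, (d - c) * (f x c + f x d) / 2 :=
        intervalIntegral.integral_mono_on hab (intervalIntegrable_intervalIntegral hab hcd hf)
          (((hfc.add hfd).const_mul _).div_const _)
          fun x hx => (hconv x hx).intervalIntegral_le_trapezoid hcd
    _ = (d - c) * ((∫ x in a..b, f x c) + ∫ x in a..b, f x d) / 2 := by
        rw [intervalIntegral.integral_div, intervalIntegral.integral_const_mul,
          intervalIntegral.integral_add hfc hfd]

theorem coordinated_convex_hadamard_quarter_general
    (a b c d : ℝ) (f : ℝ → ℝ → ℝ) (hab : a < b) (hcd : c < d)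
    (hconv₁ : ∀ y ∈ Set.Icc c d, ∀ u₁ ∈ Set.Icc a b, ∀ u₂ ∈ Set.Icc a b, ∀ t ∈ Set.Icc (0:ℝ) 1,
      f (t * u₁ + (1 - t) * u₂) y ≤ t * f u₁ y + (1 - t) * f u₂ y)
    (hconv₂ : ∀ x ∈ Set.Icc a b, ∀ v₁ ∈ Set.Icc c d, ∀ v₂ ∈ Set.Icc c d, ∀ t ∈ Set.Icc (0:ℝ) 1,
      f x (t * v₁ + (1 - t) * v₂) ≤ t * f x v₁ + (1 - t) * f x v₂)
    (hint : IntegrableOn (fun p : ℝ × ℝ => f p.1 p.2) (Set.Icc a b ×ˢ Set.Icc c d) volume) :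
    (1 / ((b - a) * (d - c))) * ∫ x in a..b, ∫ y in c..d, f x y ≤
      (1 / 4) * ((1 / (b - a)) * ∫ x in a..b, f x c +
        (1 / (b - a)) * ∫ x in a..b, f x d +
        (1 / (d - c)) * ∫ y in c..d, f a y +
        (1 / (d - c)) * ∫ y in c..d, f b y) := by
  have hconvx : ∀ y ∈ Icc c d, ConvexOn ℝ (Icc a b) (f · y) := fun y hy =>
    convexOn_of_forall_mul_add_one_sub_mul_le (convex_Icc a b) (hconv₁ y hy)
  have hconvy : ∀ x ∈ Icc a b, ConvexOn ℝ (Icc c d) (f x) := fun x hx =>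
    convexOn_of_forall_mul_add_one_sub_mul_le (convex_Icc c d) (hconv₂ x hx)
  have hfc := (hconvx c (left_mem_Icc.2 hcd.le)).intervalIntegrable hab.le
  have hfd := (hconvx d (right_mem_Icc.2 hcd.le)).intervalIntegrable hab.le
  have hfa := (hconvy a (left_mem_Icc.2 hab.le)).intervalIntegrable hcd.le
  have hfb := (hconvy b (right_mem_Icc.2 hab.le)).intervalIntegrable hcd.le
  have hhoriz := intervalIntegral_integral_le_trapezoid hab.le hcd.le hint hconvy hfc hfd
  have hvert := intervalIntegral_integral_le_trapezoid hcd.le hab.le hint.swap hconvx hfa hfb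
  rw [← intervalIntegral_integral_swap hab.le hcd.le hint] at hvert
  -- Each `∫ x in a..b,` on the right-hand side extends to the end of the sum, so the right-hand
  -- side is a nested integral of the later summands, which are constant in the variable.
  simp only [intervalIntegral.integral_add hfc intervalIntegrable_const,
    intervalIntegral.integral_add hfd intervalIntegrable_const,
    intervalIntegral.integral_add hfa intervalIntegrable_const,
    intervalIntegral.integral_const, smul_eq_mul]
  have hba : 0 < b - a := sub_pos.2 hab
  have hdc : 0 < d - c := sub_pos.2 hcd
  field_simp
  linarith

theorem coordinated_convex_hadamard_quarter
    (a b c d : ℝ) (f : ℝ → ℝ → ℝ) (hab : a < b) (hcd : c < d)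
    (hpos : ∀ x ∈ Set.Icc a b, ∀ y ∈ Set.Icc c d, 0 < f x y)
    (hconv₁ : ∀ y ∈ Set.Icc c d, ∀ u₁ ∈ Set.Icc a b, ∀ u₂ ∈ Set.Icc a b, ∀ t ∈ Set.Icc (0:ℝ) 1,
      f (t * u₁ + (1 - t) * u₂) y ≤ t * f u₁ y + (1 - t) * f u₂ y)
    (hconv₂ : ∀ x ∈ Set.Icc a b, ∀ v₁ ∈ Set.Icc c d, ∀ v₂ ∈ Set.Icc c d, ∀ t ∈ Set.Icc (0:ℝ) 1,
      f x (t * v₁ + (1 - t) * v₂) ≤ t * f x v₁ + (1 - t) * f x v₂)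
    (hint : IntegrableOn (fun p : ℝ × ℝ => f p.1 p.2) (Set.Icc a b ×ˢ Set.Icc c d) volume) :
    (1 / ((b - a) * (d - c))) * ∫ x in a..b, ∫ y in c..d, f x y ≤
      (1 / 4) * ((1 / (b - a)) * ∫ x in a..b, f x c +
        (1 / (b - a)) * ∫ x in a..b, f x d +
        (1 / (d - c)) * ∫ y in c..d, f a y +
        (1 / (d - c)) * ∫ y in c..d, f b y) :=
  coordinated_convex_hadamard_quarter_general a b c d f hab hcd hconv₁ hconv₂ hint
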